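/- arXiv:1804.01106 — 3 statements merged into one kernel-verified Lean document; each statement's English description precedes it below -/
import Mathlib

section
/- The inner product of the Hardy state ψ with the product vector |ok⟩_{RA} ⊗ |ok⟩_{SB} equals 1/(2√3); consequently the Born-rule probability P[u = ok and w = ok] = |⟨ok_{RA} ⊗ ok_{SB}, ψ⟩|² equals 1/12. -/
/-! The inner product factorises over the register pairs RA and SB, so each branch |ij⟩|kl⟩ of ψ
contributes ⟨ok|ij⟩⟨ok|kl⟩ with ⟨ok|00⟩ = 1/√2 and ⟨ok|11⟩ = -1/√2. The branch |11⟩|00⟩ cancels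
|00⟩|00⟩, leaving (1/√3) · (1/2). -/

open scoped ComplexInnerProductSpace

noncomputable section

abbrev Qubit := EuclideanSpace ℂ (Fin 2)
abbrev TwoQubit := EuclideanSpace ℂ (Fin 2 × Fin 2)
abbrev FourQubit := EuclideanSpace ℂ (Fin 2 × Fin 2 × Fin 2 × Fin 2)

/-- standard basis vectors |0⟩, |1⟩ of ℂ² -/
def ket (i : Fin 2) : Qubit := EuclideanSpace.single i 1

/-- tensor product of two qubit states -/
def tp2 (v w : Qubit) : TwoQubit := WithLp.toLp 2 fun p => v p.1 * w p.2

/-- tensor product of four qubit states, registers (R, A, S, B) -/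
def tp4 (v w x y : Qubit) : FourQubit :=
  WithLp.toLp 2 fun p => v p.1 * w p.2.1 * x p.2.2.1 * y p.2.2.2

/-- a two-qubit state in registers R,A tensored with a two-qubit state in registers S,B -/
def tpPair (v w : TwoQubit) : FourQubit :=
  WithLp.toLp 2 fun p => v (p.1, p.2.1) * w (p.2.2.1, p.2.2.2)

/-- |ok⟩ = (|00⟩ − |11⟩)/√2 -/
def okv : TwoQubit := ((Real.sqrt 2 : ℂ))⁻¹ • (tp2 (ket 0) (ket 0) - tp2 (ket 1) (ket 1))

/-- the Hardy state ψ = (1/√3)(|0000⟩ + |1100⟩ + |1111⟩) -/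
def hardy : FourQubit :=
  ((Real.sqrt 3 : ℂ))⁻¹ •
    (tp4 (ket 0) (ket 0) (ket 0) (ket 0) + tp4 (ket 1) (ket 1) (ket 0) (ket 0) +
      tp4 (ket 1) (ket 1) (ket 1) (ket 1))

theorem inner_toLp_prod_mul {𝕜 ι κ : Type*} [RCLike 𝕜] [Fintype ι] [Fintype κ]
    (v x : EuclideanSpace 𝕜 ι) (w y : EuclideanSpace 𝕜 κ) :
    inner 𝕜 (WithLp.toLp 2 fun p : ι × κ => v p.1 * w p.2 : EuclideanSpace 𝕜 (ι × κ))
      (WithLp.toLp 2 fun p : ι × κ => x p.1 * y p.2) = inner 𝕜 v x * inner 𝕜 w y := by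
  simp only [PiLp.inner_apply, RCLike.inner_apply, Fintype.sum_prod_type, Finset.sum_mul_sum,
    map_mul]
  refine Finset.sum_congr rfl fun i _ => Finset.sum_congr rfl fun j _ => ?_
  ring

theorem inner_tp2 (a b c d : Qubit) : ⟪tp2 a b, tp2 c d⟫ = ⟪a, c⟫ * ⟪b, d⟫ :=
  inner_toLp_prod_mul a c b d

theorem inner_tpPair (v w x y : TwoQubit) : ⟪tpPair v w, tpPair x y⟫ = ⟪v, x⟫ * ⟪w, y⟫ := by
  simp only [tpPair, PiLp.inner_apply, RCLike.inner_apply, Finset.sum_mul_sum,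
    ← Fintype.sum_prod_type', map_mul]
  refine Fintype.sum_equiv (Equiv.prodAssoc _ _ _).symm _ _ fun p => ?_
  simp only [Equiv.prodAssoc_symm_apply]
  ring

theorem tpPair_tp2_tp2 (a b c d : Qubit) : tpPair (tp2 a b) (tp2 c d) = tp4 a b c d := by
  ext p
  simp [tpPair, tp2, tp4, mul_assoc]

theorem inner_ket_ket (i j : Fin 2) : ⟪ket i, ket j⟫ = if i = j then 1 else 0 := by
  simp [ket, EuclideanSpace.inner_single_left]

theorem inner_okv_tp2_ket_zero : ⟪okv, tp2 (ket 0) (ket 0)⟫ = ((Real.sqrt 2 : ℂ))⁻¹ := by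
  simp only [okv, inner_smul_left, inner_sub_left, inner_tp2, inner_ket_ket]
  simp

theorem inner_okv_tp2_ket_one : ⟪okv, tp2 (ket 1) (ket 1)⟫ = -((Real.sqrt 2 : ℂ))⁻¹ := by
  simp only [okv, inner_smul_left, inner_sub_left, inner_tp2, inner_ket_ket]
  simp

theorem inner_okok_hardy :
    ⟪tpPair okv okv, hardy⟫ = ((1 / (2 * Real.sqrt 3) : ℝ) : ℂ) ∧
    ‖⟪tpPair okv okv, hardy⟫‖ ^ 2 = 1 / 12 := by
  have hinner : ⟪tpPair okv okv, hardy⟫ = ((1 / (2 * Real.sqrt 3) : ℝ) : ℂ) := by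
    simp only [hardy, inner_smul_right, inner_add_right, ← tpPair_tp2_tp2, inner_tpPair,
      inner_okv_tp2_ket_zero, inner_okv_tp2_ket_one]
    rw [neg_mul, add_neg_cancel, zero_add, neg_mul_neg, ← mul_inv, ← Complex.ofReal_mul,
      Real.mul_self_sqrt two_pos.le]
    push_cast
    ring
  refine ⟨hinner, ?_⟩
  rw [hinner, Complex.norm_real, Real.norm_eq_abs, sq_abs, div_pow, mul_pow, Real.sq_sqrt three_pos.le]
  norm_num

end
end

section
/- (Abstract probabilistic form of the Frauchiger-Renner/Hardy contradiction.) There is no probability mass function p on {0,1}⁴ (with coordinates written (a, b, u, w), where value 1 of u or w is read as outcome 'ok') satisfying simultaneously: p(u = 1 and b = 0) = 0, p(b = 1 and a = 0) = 0, p(a = 1 and w = 1) = 0, and p(u = 1 and w = 1) > 0. -/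
/-! Hardy's chain of inferences: a null event absorbs every event contained in the union of two
null events. Since `u = ok` forces `b = 1`, `b = 1` forces `a = 1`, and `a = 1` forces
`w = fail` up to null events, first `{b = 1, w = ok}` and then `{u = ok, w = ok}` is null. -/

open Finset

theorem Finset.sum_filter_eq_zero_of_imp_or {ι M : Type*} [AddCommMonoid M] [PartialOrder M]
    [IsOrderedAddMonoid M] {s : Finset ι} {p : ι → M} (hp : ∀ x, 0 ≤ p x)
    {P Q R : ι → Prop} [DecidablePred P] [DecidablePred Q] [DecidablePred R]
    (hQ : ∑ x ∈ s.filter Q, p x = 0) (hR : ∑ x ∈ s.filter R, p x = 0)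
    (hPQR : ∀ x, P x → Q x ∨ R x) :
    ∑ x ∈ s.filter P, p x = 0 := by
  rw [sum_eq_zero_iff_of_nonneg fun x _ ↦ hp x] at hQ hR ⊢
  intro x hx
  rw [mem_filter] at hx
  rcases hPQR x hx.2 with hq | hr
  · exact hQ x (mem_filter.2 ⟨hx.1, hq⟩)
  · exact hR x (mem_filter.2 ⟨hx.1, hr⟩)

theorem no_pmf_for_FR_constraints :
    ¬ ∃ p : Bool × Bool × Bool × Bool → ℝ,
      (∀ x, 0 ≤ p x) ∧ (∑ x, p x = 1) ∧
      (∑ x ∈ univ.filter (fun x : Bool × Bool × Bool × Bool =>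
          x.2.2.1 = true ∧ x.2.1 = false), p x) = 0 ∧
      (∑ x ∈ univ.filter (fun x : Bool × Bool × Bool × Bool =>
          x.2.1 = true ∧ x.1 = false), p x) = 0 ∧
      (∑ x ∈ univ.filter (fun x : Bool × Bool × Bool × Bool =>
          x.1 = true ∧ x.2.2.2 = true), p x) = 0 ∧
      0 < (∑ x ∈ univ.filter (fun x : Bool × Bool × Bool × Bool =>
          x.2.2.1 = true ∧ x.2.2.2 = true), p x) := by
  rintro ⟨p, hp, -, hub, hba, haw, huw⟩
  have hbw : ∑ x ∈ univ.filter (fun x : Bool × Bool × Bool × Bool =>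
      x.2.1 = true ∧ x.2.2.2 = true), p x = 0 :=
    sum_filter_eq_zero_of_imp_or hp hba haw <| by
      rintro ⟨a, b, u, w⟩ ⟨rfl, rfl⟩
      cases a <;> simp
  refine huw.ne' (sum_filter_eq_zero_of_imp_or hp hub hbw ?_)
  rintro ⟨a, b, u, w⟩ ⟨rfl, rfl⟩
  cases b <;> simp
end

section
/- (Equivalence of the relative-state formalism and standard quantum mechanics for consecutive measurements on the same system.) Let H be a finite-dimensional complex inner product space with two orthonormal bases {a_i} and {b_j}, let φ ∈ H be a unit vector, and let {A_i} and {B_j} be orthonormal families in finite-dimensional spaces H₁ and H₂ respectively. Define the isometries V₁ : H → H ⊗ H₁ by V₁ a_i = a_i ⊗ A_i and V₂ : H → H ⊗ H₂ by V₂ b_j = b_j ⊗ B_j, and set Ψ = ((V₂ ⊗ id_{H₁}) ∘ V₁) φ ∈ H ⊗ H₂ ⊗ H₁. Then the relative-state joint probability q(a_i, b_j) = ‖(id_H ⊗ |B_j⟩⟨B_j| ⊗ |A_i⟩⟨A_i|) Ψ‖² equals |⟨a_i, φ⟩|² · |⟨b_j, a_i⟩|²; in particular, whenever ⟨a_i,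 φ⟩ ≠ 0, the conditional probability q(b_j | a_i) = q(a_i, b_j) / Σ_{j'} q(a_i, b_{j'}) equals the standard Born-rule conditional probability |⟨b_j, a_i⟩|². -/
/-! Expanding φ in the basis `a` and then each `a i` in the basis `b` writes
Ψ = Σᵢ Σⱼ ⟪a i, φ⟫⟪b j, a i⟫ · (b j ⊗ B j ⊗ A i). By orthonormality of the records, the
projection onto `B j ⊗ A i` keeps exactly one term, a multiple of a unit vector; summing its
squared norm over `j` is Parseval's identity for `b`, which yields the conditional probability. -/

open scoped ComplexInnerProductSpace

section Orthonormal

variable {𝕜 E M ι : Type*} [RCLike 𝕜] [NormedAddCommGroup E] [InnerProductSpace 𝕜 E]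
  [AddCommMonoid M] [Module 𝕜 M] [Fintype ι]

theorem Orthonormal.sum_inner_smul {v : ι → E} (hv : Orthonormal 𝕜 v) (i : ι) (w : ι → M) :
    ∑ i', inner 𝕜 (v i) (v i') • w i' = w i := by
  classical
  simp [orthonormal_iff_ite.mp hv, ite_smul]

theorem OrthonormalBasis.map_eq_sum_inner_smul (b : OrthonormalBasis ι 𝕜 E) (f : E →ₗ[𝕜] M)
    (x : E) : f x = ∑ i, inner 𝕜 (b i) x • f (b i) := by
  conv_lhs => rw [← b.sum_repr' x]
  simp only [map_sum, map_smul]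

end Orthonormal

theorem norm_apply_apply_apply_of_inner_eq_mul {𝕜 E F G T : Type*} [RCLike 𝕜]
    [NormedAddCommGroup E] [InnerProductSpace 𝕜 E] [NormedAddCommGroup F] [InnerProductSpace 𝕜 F]
    [NormedAddCommGroup G] [InnerProductSpace 𝕜 G] [NormedAddCommGroup T] [InnerProductSpace 𝕜 T]
    (t : E →ₗ[𝕜] F →ₗ[𝕜] G →ₗ[𝕜] T)
    (ht : ∀ (x x' : E) (y y' : F) (z z' : G),
      inner 𝕜 (t x y z) (t x' y' z') = inner 𝕜 x x' * inner 𝕜 y y' * inner 𝕜 z z')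
    (x : E) (y : F) (z : G) : ‖t x y z‖ = ‖x‖ * ‖y‖ * ‖z‖ := by
  have hsq : ((‖t x y z‖ ^ 2 : ℝ) : 𝕜) = ((‖x‖ * ‖y‖ * ‖z‖) ^ 2 : ℝ) := by
    push_cast
    rw [← inner_self_eq_norm_sq_to_K, ht, inner_self_eq_norm_sq_to_K, inner_self_eq_norm_sq_to_K,
      inner_self_eq_norm_sq_to_K]
    ring
  exact (pow_left_inj₀ (norm_nonneg _) (by positivity) two_ne_zero).mp (RCLike.ofReal_inj.mp hsq)

section RelativeState

variable {H H₁ H₂ T₁ T ι κ : Type*} [Fintype κ]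
  [NormedAddCommGroup H] [InnerProductSpace ℂ H] [NormedAddCommGroup H₁] [InnerProductSpace ℂ H₁]
  [NormedAddCommGroup H₂] [InnerProductSpace ℂ H₂] [AddCommGroup T₁] [Module ℂ T₁]
  [AddCommGroup T] [Module ℂ T]

theorem proj_apply_second_measurement (b : OrthonormalBasis κ ℂ H)
    (A : ι → H₁) (B : κ → H₂) (hB : Orthonormal ℂ B)
    (t₁ : H →ₗ[ℂ] H₁ →ₗ[ℂ] T₁) (t : H →ₗ[ℂ] H₂ →ₗ[ℂ] H₁ →ₗ[ℂ] T)
    (W₂ : T₁ →ₗ[ℂ] T) (hW₂ : ∀ (j : κ) (z : H₁), W₂ (t₁ (b j) z) = t (b j) (B j) z)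
    (P : κ → ι → T →ₗ[ℂ] T)
    (hP : ∀ (j : κ) (i : ι) (x : H) (y : H₂) (z : H₁),
      P j i (t x y z) = (⟪B j, y⟫ * ⟪A i, z⟫) • t x (B j) (A i))
    (j : κ) (i : ι) (x : H) (z : H₁) :
    P j i (W₂ (t₁ x z)) = (⟪A i, z⟫ * ⟪b j, x⟫) • t (b j) (B j) (A i) := by
  calc P j i (W₂ (t₁ x z))
      = ∑ j', ⟪b j', x⟫ • P j i (t (b j') (B j') z) :=
        b.map_eq_sum_inner_smul (P j i ∘ₗ W₂ ∘ₗ t₁.flip z) x |>.trans <| by simp [hW₂]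
    _ = ∑ j', ⟪B j, B j'⟫ • (⟪A i, z⟫ * ⟪b j', x⟫) • t (b j') (B j) (A i) := by
        simp only [hP, smul_smul]
        congr! 2
        ring
    _ = (⟪A i, z⟫ * ⟪b j, x⟫) • t (b j) (B j) (A i) := hB.sum_inner_smul j _

theorem proj_apply_relative_state [Fintype ι] (a : OrthonormalBasis ι ℂ H)
    (b : OrthonormalBasis κ ℂ H) (φ : H) (A : ι → H₁) (hA : Orthonormal ℂ A)
    (B : κ → H₂) (hB : Orthonormal ℂ B)
    (t₁ : H →ₗ[ℂ] H₁ →ₗ[ℂ] T₁) (t : H →ₗ[ℂ] H₂ →ₗ[ℂ] H₁ →ₗ[ℂ] T)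
    (V₁ : H →ₗ[ℂ] T₁) (hV₁ : ∀ i, V₁ (a i) = t₁ (a i) (A i))
    (W₂ : T₁ →ₗ[ℂ] T) (hW₂ : ∀ (j : κ) (z : H₁), W₂ (t₁ (b j) z) = t (b j) (B j) z)
    (P : κ → ι → T →ₗ[ℂ] T)
    (hP : ∀ (j : κ) (i : ι) (x : H) (y : H₂) (z : H₁),
      P j i (t x y z) = (⟪B j, y⟫ * ⟪A i, z⟫) • t x (B j) (A i))
    (j : κ) (i : ι) :
    P j i (W₂ (V₁ φ)) = (⟪a i, φ⟫ * ⟪b j, a i⟫) • t (b j) (B j) (A i) := by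
  calc P j i (W₂ (V₁ φ))
      = ∑ i', ⟪a i', φ⟫ • P j i (W₂ (t₁ (a i') (A i'))) :=
        a.map_eq_sum_inner_smul (P j i ∘ₗ W₂ ∘ₗ V₁) φ |>.trans <| by simp [hV₁]
    _ = ∑ i', ⟪A i, A i'⟫ • (⟪a i', φ⟫ * ⟪b j, a i'⟫) • t (b j) (B j) (A i) := by
        simp only [proj_apply_second_measurement b A B hB t₁ t W₂ hW₂ P hP, smul_smul]
        congr! 2
        ring
    _ = (⟪a i, φ⟫ * ⟪b j, a i⟫) • t (b j) (B j) (A i) := hA.sum_inner_smul i _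

end RelativeState

theorem relative_state_equals_standard_QM_general
    {H H₁ H₂ T₁ T : Type*} {ι κ : Type*} [Fintype ι] [Fintype κ]
    [NormedAddCommGroup H] [InnerProductSpace ℂ H]
    [NormedAddCommGroup H₁] [InnerProductSpace ℂ H₁]
    [NormedAddCommGroup H₂] [InnerProductSpace ℂ H₂]
    [NormedAddCommGroup T₁] [InnerProductSpace ℂ T₁]
    [NormedAddCommGroup T] [InnerProductSpace ℂ T]
    (a : OrthonormalBasis ι ℂ H) (b : OrthonormalBasis κ ℂ H)
    (φ : H)
    (A : ι → H₁) (hA : Orthonormal ℂ A)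
    (B : κ → H₂) (hB : Orthonormal ℂ B)
    -- t₁ models the tensor product pairing H × H₁ → H ⊗ H₁
    (t₁ : H →ₗ[ℂ] H₁ →ₗ[ℂ] T₁)
    -- t models the tensor product pairing H × H₂ × H₁ → H ⊗ H₂ ⊗ H₁
    (t : H →ₗ[ℂ] H₂ →ₗ[ℂ] H₁ →ₗ[ℂ] T)
    (ht : ∀ (x x' : H) (y y' : H₂) (z z' : H₁),
      ⟪t x y z, t x' y' z'⟫ = ⟪x, x'⟫ * ⟪y, y'⟫ * ⟪z, z'⟫)
    -- V₁ : H → H ⊗ H₁ is the first observer's isometry, a_i ↦ a_i ⊗ A_i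
    (V₁ : H →ₗ[ℂ] T₁) (hV₁ : ∀ i, V₁ (a i) = t₁ (a i) (A i))
    -- W₂ : H ⊗ H₁ → H ⊗ H₂ ⊗ H₁ models V₂ ⊗ id_{H₁}, where V₂ b_j = b_j ⊗ B_j
    (W₂ : T₁ →ₗ[ℂ] T) (hW₂ : ∀ (j : κ) (z : H₁), W₂ (t₁ (b j) z) = t (b j) (B j) z)
    -- P j i models the projection id_H ⊗ |B_j⟩⟨B_j| ⊗ |A_i⟩⟨A_i|
    (P : κ → ι → T →ₗ[ℂ] T)
    (hP : ∀ (j : κ) (i : ι) (x : H) (y : H₂) (z : H₁),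
      P j i (t x y z) = (⟪B j, y⟫ * ⟪A i, z⟫) • t x (B j) (A i)) :
    ∀ (i : ι) (j : κ),
      ‖P j i (W₂ (V₁ φ))‖ ^ 2
          = ‖⟪a i, φ⟫‖ ^ 2 * ‖⟪b j, a i⟫‖ ^ 2 ∧
      (⟪a i, φ⟫ ≠ 0 →
        ‖P j i (W₂ (V₁ φ))‖ ^ 2 / ∑ j' : κ, ‖P j' i (W₂ (V₁ φ))‖ ^ 2
          = ‖⟪b j, a i⟫‖ ^ 2) := by
  intro i j
  have hq : ∀ j, ‖P j i (W₂ (V₁ φ))‖ ^ 2 = ‖⟪a i, φ⟫‖ ^ 2 * ‖⟪b j, a i⟫‖ ^ 2 := fun j => by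
    rw [proj_apply_relative_state a b φ A hA B hB t₁ t V₁ hV₁ W₂ hW₂ P hP, norm_smul,
      norm_apply_apply_apply_of_inner_eq_mul t ht, b.orthonormal.1 j, hB.1 j, hA.1 i, norm_mul]
    ring
  refine ⟨hq j, fun hne => ?_⟩
  rw [Finset.sum_congr rfl fun j' _ => hq j', ← Finset.mul_sum, b.sum_sq_norm_inner_right,
    a.orthonormal.1 i, hq j]
  field_simp

theorem relative_state_equals_standard_QM
    {H H₁ H₂ T₁ T : Type*} {ι κ : Type*} [Fintype ι] [Fintype κ]
    [NormedAddCommGroup H] [InnerProductSpace ℂ H] [FiniteDimensional ℂ H]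
    [NormedAddCommGroup H₁] [InnerProductSpace ℂ H₁] [FiniteDimensional ℂ H₁]
    [NormedAddCommGroup H₂] [InnerProductSpace ℂ H₂] [FiniteDimensional ℂ H₂]
    [NormedAddCommGroup T₁] [InnerProductSpace ℂ T₁] [FiniteDimensional ℂ T₁]
    [NormedAddCommGroup T] [InnerProductSpace ℂ T] [FiniteDimensional ℂ T]
    (a : OrthonormalBasis ι ℂ H) (b : OrthonormalBasis κ ℂ H)
    (φ : H) (hφ : ‖φ‖ = 1)
    (A : ι → H₁) (hA : Orthonormal ℂ A)
    (B : κ → H₂) (hB : Orthonormal ℂ B)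
    -- t₁ models the tensor product pairing H × H₁ → H ⊗ H₁
    (t₁ : H →ₗ[ℂ] H₁ →ₗ[ℂ] T₁)
    (ht₁ : ∀ (x x' : H) (y y' : H₁), ⟪t₁ x y, t₁ x' y'⟫ = ⟪x, x'⟫ * ⟪y, y'⟫)
    -- t models the tensor product pairing H × H₂ × H₁ → H ⊗ H₂ ⊗ H₁
    (t : H →ₗ[ℂ] H₂ →ₗ[ℂ] H₁ →ₗ[ℂ] T)
    (ht : ∀ (x x' : H) (y y' : H₂) (z z' : H₁),
      ⟪t x y z, t x' y' z'⟫ = ⟪x, x'⟫ * ⟪y, y'⟫ * ⟪z, z'⟫)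
    -- V₁ : H → H ⊗ H₁ is the first observer's isometry, a_i ↦ a_i ⊗ A_i
    (V₁ : H →ₗ[ℂ] T₁) (hV₁ : ∀ i, V₁ (a i) = t₁ (a i) (A i))
    -- W₂ : H ⊗ H₁ → H ⊗ H₂ ⊗ H₁ models V₂ ⊗ id_{H₁}, where V₂ b_j = b_j ⊗ B_j
    (W₂ : T₁ →ₗ[ℂ] T) (hW₂ : ∀ (j : κ) (z : H₁), W₂ (t₁ (b j) z) = t (b j) (B j) z)
    -- P j i models the projection id_H ⊗ |B_j⟩⟨B_j| ⊗ |A_i⟩⟨A_i|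
    (P : κ → ι → T →ₗ[ℂ] T)
    (hP : ∀ (j : κ) (i : ι) (x : H) (y : H₂) (z : H₁),
      P j i (t x y z) = (⟪B j, y⟫ * ⟪A i, z⟫) • t x (B j) (A i)) :
    ∀ (i : ι) (j : κ),
      ‖P j i (W₂ (V₁ φ))‖ ^ 2
          = ‖⟪a i, φ⟫‖ ^ 2 * ‖⟪b j, a i⟫‖ ^ 2 ∧
      (⟪a i, φ⟫ ≠ 0 →
        ‖P j i (W₂ (V₁ φ))‖ ^ 2 / ∑ j' : κ, ‖P j' i (W₂ (V₁ φ))‖ ^ 2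
          = ‖⟪b j, a i⟫‖ ^ 2) :=
  relative_state_equals_standard_QM_general a b φ A hA B hB t₁ t ht V₁ hV₁ W₂ hW₂ P hP
end
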